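/- arXiv:1501.06391 — 2 statements merged into one kernel-verified Lean document; each statement's English description precedes it below -/
import Mathlib

section
/- If m = d·n for some natural numbers d, n ≥ 1, then for every p ∈ [1,∞) and every bounded real sequence x, ‖x‖_{∞,p,m} ≤ ‖x‖_{∞,p,n}. -/
/-!
Cut a window of length `d * n` into `d` consecutive windows of length `n`: its mean of `|x i| ^ p`
is the average of their means, each of which is at most `‖x‖_{∞,p,n} ^ p`.
-/

open Finset

noncomputable def discNorm (x : ℕ → ℝ) (p : ℝ) (n : ℕ) : ℝ :=
  ⨆ j : ℕ, ((1 / (n : ℝ)) * ∑ i ∈ Finset.range n, |x (j + i)| ^ p) ^ (1 / p)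

theorem Finset.sum_range_mul_eq_sum_sum {M : Type*} [AddCommMonoid M] (f : ℕ → M) (d n : ℕ) :
    ∑ i ∈ range (d * n), f i = ∑ t ∈ range d, ∑ i ∈ range n, f (t * n + i) := by
  induction d with
  | zero => simp
  | succ d ih => rw [Nat.succ_mul, sum_range_add, ih, sum_range_succ]

theorem one_div_mul_sum_range_le {f : ℕ → ℝ} {c : ℝ} {d : ℕ} (hc : 0 ≤ c)
    (h : ∀ t ∈ range d, f t ≤ c) : 1 / (d : ℝ) * ∑ t ∈ range d, f t ≤ c := by
  rcases d.eq_zero_or_pos with rfl | hd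
  · simpa using hc
  · calc 1 / (d : ℝ) * ∑ t ∈ range d, f t ≤ 1 / (d : ℝ) * (d * c) := by
          gcongr
          simpa using sum_le_card_nsmul (range d) f c h
      _ = c := by field_simp

noncomputable def blockMean (x : ℕ → ℝ) (p : ℝ) (n j : ℕ) : ℝ :=
  (1 / (n : ℝ)) * ∑ i ∈ range n, |x (j + i)| ^ p

namespace blockMean

theorem nonneg (x : ℕ → ℝ) (p : ℝ) (n j : ℕ) : 0 ≤ blockMean x p n j :=
  mul_nonneg (by positivity) (sum_nonneg fun _ _ ↦ by positivity)

theorem mul_eq (x : ℕ → ℝ) (p : ℝ) (d n j : ℕ) :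
    blockMean x p (d * n) j = (1 / (d : ℝ)) * ∑ t ∈ range d, blockMean x p n (j + t * n) := by
  simp only [blockMean, sum_range_mul_eq_sum_sum (fun i ↦ |x (j + i)| ^ p), mul_sum, add_assoc,
    Nat.cast_mul, one_div, mul_inv, mul_assoc]

variable {x : ℕ → ℝ} {p : ℝ}

theorem le_rpow_of_abs_le {C : ℝ} (hp : 0 ≤ p) (hC : ∀ i, |x i| ≤ C) (n j : ℕ) :
    blockMean x p n j ≤ C ^ p :=
  one_div_mul_sum_range_le (Real.rpow_nonneg ((abs_nonneg _).trans (hC 0)) p)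
    fun i _ ↦ Real.rpow_le_rpow (abs_nonneg _) (hC (j + i)) hp

theorem bddAbove_rpow_of_bounded (hp : 0 ≤ p) (hx : ∃ C, ∀ i, |x i| ≤ C) (n : ℕ) :
    BddAbove (Set.range fun j ↦ blockMean x p n j ^ (1 / p)) := by
  obtain ⟨C, hC⟩ := hx
  refine ⟨(C ^ p) ^ (1 / p), Set.forall_mem_range.2 fun j ↦ ?_⟩
  gcongr
  · exact nonneg x p n j
  · exact le_rpow_of_abs_le hp hC n j

theorem le_rpow_discNorm (hp : 0 < p) {n : ℕ}
    (hbdd : BddAbove (Set.range fun j ↦ blockMean x p n j ^ (1 / p))) (j : ℕ) :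
    blockMean x p n j ≤ discNorm x p n ^ p := by
  calc blockMean x p n j = (blockMean x p n j ^ (1 / p)) ^ p := by
        rw [← Real.rpow_mul (nonneg x p n j), one_div_mul_cancel hp.ne', Real.rpow_one]
    _ ≤ discNorm x p n ^ p :=
        Real.rpow_le_rpow (Real.rpow_nonneg (nonneg x p n j) _) (le_ciSup hbdd j) hp.le

end blockMean

theorem discNorm_nonneg (x : ℕ → ℝ) (p : ℝ) (n : ℕ) : 0 ≤ discNorm x p n :=
  Real.iSup_nonneg fun j ↦ Real.rpow_nonneg (blockMean.nonneg x p n j) _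

theorem discNorm_le_of_blockMean_le {x : ℕ → ℝ} {p c : ℝ} {n : ℕ} (hp : 0 < p) (hc : 0 ≤ c)
    (h : ∀ j, blockMean x p n j ≤ c ^ p) : discNorm x p n ≤ c :=
  ciSup_le fun j ↦ calc
    blockMean x p n j ^ (1 / p) ≤ (c ^ p) ^ (1 / p) := by
      gcongr
      exacts [blockMean.nonneg x p n j, h j]
    _ = c := by rw [← Real.rpow_mul hc, mul_one_div_cancel hp.ne', Real.rpow_one]

theorem stmt3_general (d n m : ℕ) (hm : m = d * n)
    (p : ℝ) (hp : 1 ≤ p) (x : ℕ → ℝ) (hx : ∃ C, ∀ i, |x i| ≤ C) :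
    discNorm x p m ≤ discNorm x p n := by
  subst hm
  have hp0 : 0 < p := one_pos.trans_le hp
  have hbdd := blockMean.bddAbove_rpow_of_bounded hp0.le hx n
  refine discNorm_le_of_blockMean_le hp0 (discNorm_nonneg x p n) fun j ↦ ?_
  rw [blockMean.mul_eq]
  exact one_div_mul_sum_range_le (Real.rpow_nonneg (discNorm_nonneg x p n) p)
    fun t _ ↦ blockMean.le_rpow_discNorm hp0 hbdd (j + t * n)

theorem stmt3 (d n m : ℕ) (hd : 1 ≤ d) (hn : 1 ≤ n) (hm : m = d * n)
    (p : ℝ) (hp : 1 ≤ p) (x : ℕ → ℝ) (hx : ∃ C, ∀ i, |x i| ≤ C) :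
    discNorm x p m ≤ discNorm x p n :=
  stmt3_general d n m hm p hp x hx
end

section
/- Let n, m ∈ ℕ with 1 ≤ n ≤ m and suppose n does not divide m. Then for every p ∈ [1,∞) there exist bounded real sequences x and y such that ‖x‖_{∞,p,n} < ‖x‖_{∞,p,m} and ‖y‖_{∞,p,m} < ‖y‖_{∞,p,n}. -/
/-!
The indicator of the multiples of `n` has at most one `1` in each window of length `n`, while
the window `[0, m)` contains `m / n + 1` multiples of `n`, which is more than `m / n` because
`n ∤ m`. The indicator of `[0, n)` fills the window `[0, n)`, but a window of length `m > n`
holds at most `n` of its ones.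
-/

open Finset

/-- `discNorm x p k` is definitionally `⨆ j, windowMean x p k j ^ (1 / p)`. -/
noncomputable def windowMean (x : ℕ → ℝ) (p : ℝ) (k j : ℕ) : ℝ :=
  (1 / (k : ℝ)) * ∑ i ∈ range k, |x (j + i)| ^ p

section WindowMean

variable {x : ℕ → ℝ} {p : ℝ} {k : ℕ}

lemma windowMean_nonneg (j : ℕ) : 0 ≤ windowMean x p k j := by
  unfold windowMean
  have : ∀ i ∈ range k, 0 ≤ |x (j + i)| ^ p := fun i _ => by positivity
  positivity

lemma windowMean_le_rpow {C : ℝ} (hC : ∀ i, |x i| ≤ C) (hp : 0 ≤ p) (j : ℕ) :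
    windowMean x p k j ≤ C ^ p := by
  have hterm : ∀ i ∈ range k, |x (j + i)| ^ p ≤ C ^ p := fun i _ =>
    Real.rpow_le_rpow (abs_nonneg _) (hC _) hp
  have hCp : 0 ≤ C ^ p := Real.rpow_nonneg ((abs_nonneg _).trans (hC 0)) p
  calc windowMean x p k j ≤ 1 / (k : ℝ) * (k * C ^ p) := by
        unfold windowMean
        gcongr
        simpa using sum_le_sum hterm
    _ ≤ C ^ p := by
        rcases eq_or_ne k 0 with rfl | hk
        · simpa using hCp
        · rw [← mul_assoc, one_div_mul_cancel (Nat.cast_ne_zero.2 hk), one_mul]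

lemma rpow_windowMean_le_discNorm {C : ℝ} (hC : ∀ i, |x i| ≤ C) (hp : 0 ≤ p) (j : ℕ) :
    windowMean x p k j ^ (1 / p) ≤ discNorm x p k := by
  refine le_ciSup (f := fun j => windowMean x p k j ^ (1 / p)) ⟨(C ^ p) ^ (1 / p), ?_⟩ j
  rintro _ ⟨j', rfl⟩
  exact Real.rpow_le_rpow (windowMean_nonneg j') (windowMean_le_rpow hC hp j') (by positivity)

lemma discNorm_le_rpow {c : ℝ} (hp : 0 ≤ p) (h : ∀ j, windowMean x p k j ≤ c) :
    discNorm x p k ≤ c ^ (1 / p) :=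
  ciSup_le fun j => Real.rpow_le_rpow (windowMean_nonneg j) (h j) (by positivity)

end WindowMean

lemma abs_indicator_one_le_one (S : Set ℕ) (i : ℕ) : |S.indicator (1 : ℕ → ℝ) i| ≤ 1 := by
  by_cases h : i ∈ S <;> simp [h]

lemma windowMean_indicator_one (S : Set ℕ) [DecidablePred (· ∈ S)] {p : ℝ} (hp : p ≠ 0)
    (k j : ℕ) : windowMean (S.indicator 1) p k j = #{i ∈ range k | j + i ∈ S} / k := by
  rw [windowMean, card_filter, Nat.cast_sum, one_div, div_eq_inv_mul]
  congr 1
  refine sum_congr rfl fun i _ => ?_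
  by_cases h : j + i ∈ S <;> simp [h, Real.zero_rpow hp]

lemma card_filter_dvd_add_le_one {n k : ℕ} (hk : k ≤ n) (j : ℕ) :
    #{i ∈ range k | n ∣ j + i} ≤ 1 := by
  refine card_le_one.2 fun a ha b hb => ?_
  simp only [mem_filter, mem_range] at ha hb
  have hab : j + a ≡ j + b [MOD n] :=
    (Nat.modEq_zero_iff_dvd.2 ha.2).trans (Nat.modEq_zero_iff_dvd.2 hb.2).symm
  exact (Nat.ModEq.add_left_cancel' j hab).eq_of_lt_of_lt (by omega) (by omega)

lemma div_add_one_le_card_filter_dvd {n m : ℕ} (hn : n ≠ 0) (hdvd : ¬ n ∣ m) :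
    m / n + 1 ≤ #{i ∈ range m | n ∣ i} := by
  have hlt : n * (m / n) < m := lt_of_le_of_ne (Nat.mul_div_le m n) fun h => hdvd ⟨_, h.symm⟩
  calc m / n + 1 = #((range (m / n + 1)).image (n * ·)) := by
        rw [card_image_of_injective _ (mul_right_injective₀ hn), card_range]
    _ ≤ #{i ∈ range m | n ∣ i} := by
        refine card_le_card fun i hi => ?_
        obtain ⟨t, ht, rfl⟩ := mem_image.1 hi
        have : n * t ≤ n * (m / n) := Nat.mul_le_mul_left n (by simpa [Nat.lt_succ_iff] using ht)
        simp only [mem_filter, mem_range]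
        exact ⟨by omega, dvd_mul_right n t⟩

lemma card_filter_add_lt_le (n k j : ℕ) : #{i ∈ range k | j + i < n} ≤ n := by
  calc #{i ∈ range k | j + i < n} ≤ #(range n) :=
        card_le_card fun i hi => by simp only [mem_filter, mem_range] at hi ⊢; omega
    _ = n := card_range n

lemma discNorm_indicator_dvd_lt {n m : ℕ} (hn : n ≠ 0) (hdvd : ¬ n ∣ m) {p : ℝ} (hp : 0 < p) :
    discNorm ({i | n ∣ i}.indicator 1) p n < discNorm ({i | n ∣ i}.indicator 1) p m := by
  have hnR : (0 : ℝ) < n := by positivity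
  have hmR : (0 : ℝ) < m := by
    exact_mod_cast Nat.pos_of_ne_zero fun h : m = 0 => hdvd (h ▸ dvd_zero n)
  calc discNorm ({i | n ∣ i}.indicator 1) p n ≤ (1 / n : ℝ) ^ (1 / p) := by
        refine discNorm_le_rpow hp.le fun j => ?_
        rw [windowMean_indicator_one _ hp.ne']
        gcongr
        exact_mod_cast card_filter_dvd_add_le_one le_rfl j
    _ < ((m / n + 1 : ℕ) / m : ℝ) ^ (1 / p) := by
        refine Real.rpow_lt_rpow (by positivity) ?_ (by positivity)
        rw [div_lt_div_iff₀ hnR hmR, one_mul, mul_comm]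
        exact_mod_cast Nat.lt_mul_div_succ m (Nat.pos_of_ne_zero hn)
    _ ≤ windowMean ({i | n ∣ i}.indicator 1) p m 0 ^ (1 / p) := by
        rw [windowMean_indicator_one _ hp.ne']
        gcongr
        simpa using div_add_one_le_card_filter_dvd hn hdvd
    _ ≤ discNorm ({i | n ∣ i}.indicator 1) p m :=
        rpow_windowMean_le_discNorm (abs_indicator_one_le_one _) hp.le 0

lemma discNorm_indicator_Iio_lt {n m : ℕ} (hn : n ≠ 0) (hnm : n < m) {p : ℝ} (hp : 0 < p) :
    discNorm ((Set.Iio n).indicator 1) p m < discNorm ((Set.Iio n).indicator 1) p n := by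
  have hnR : (0 : ℝ) < n := by positivity
  have hmR : (0 : ℝ) < m := by exact_mod_cast hnm.trans_le' (Nat.zero_le n)
  calc discNorm ((Set.Iio n).indicator 1) p m ≤ (n / m : ℝ) ^ (1 / p) := by
        refine discNorm_le_rpow hp.le fun j => ?_
        rw [windowMean_indicator_one _ hp.ne']
        gcongr
        simpa using card_filter_add_lt_le n m j
    _ < 1 := Real.rpow_lt_one (by positivity) ((div_lt_one hmR).2 (by exact_mod_cast hnm))
        (by positivity)
    _ = windowMean ((Set.Iio n).indicator 1) p n 0 ^ (1 / p) := by
        rw [windowMean_indicator_one _ hp.ne', filter_true_of_mem fun i hi => by simpa using hi,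
          card_range, div_self hnR.ne', Real.one_rpow]
    _ ≤ discNorm ((Set.Iio n).indicator 1) p n :=
        rpow_windowMean_le_discNorm (abs_indicator_one_le_one _) hp.le 0

theorem stmt4 (n m : ℕ) (hn : 1 ≤ n) (hnm : n ≤ m) (hdvd : ¬ n ∣ m)
    (p : ℝ) (hp : 1 ≤ p) :
    ∃ x y : ℕ → ℝ, (∃ C, ∀ i, |x i| ≤ C) ∧ (∃ C, ∀ i, |y i| ≤ C) ∧
      discNorm x p n < discNorm x p m ∧ discNorm y p m < discNorm y p n := by
  have hn0 : n ≠ 0 := by omega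
  have hp0 : 0 < p := by linarith
  have hnm' : n < m := lt_of_le_of_ne hnm fun h => hdvd (h ▸ dvd_rfl)
  exact ⟨{i | n ∣ i}.indicator 1, (Set.Iio n).indicator 1,
    ⟨1, abs_indicator_one_le_one _⟩, ⟨1, abs_indicator_one_le_one _⟩,
    discNorm_indicator_dvd_lt hn0 hdvd hp0, discNorm_indicator_Iio_lt hn0 hnm' hp0⟩
end
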